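/- Let V be a finite-dimensional real vector space, and let Ω ⊆ V contain a solid ε-cone around a 2-dimensional subspace P ⊆ V (for some ε > 0), i.e. all v whose angle with P is less than ε with respect to some inner product. Then the convex hull of the path-component of Ω containing any point of the cone is all of V; in particular a solid cone about a rank-2 subspace is an ample subset. -/

import Mathlib

open Module Real InnerProductGeometry

section Aux

variable {V : Type*} [NormedAddCommGroup V] [InnerProductSpace ℝ V]

local notation "⟪" x ", " y "⟫" => @inner ℝ _ _ x y

/-- Points on the segment from `u` to `w` stay nonzero and make angle with `w`
at most `angle u w`, provided that angle is less than `π`. -/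
lemma seg_in_cone {u w : V} (hu : u ≠ 0) (hw : w ≠ 0)
    (hπ : angle u w < π) :
    ∀ x ∈ segment ℝ u w, x ≠ 0 ∧ angle x w ≤ angle u w := by
  rintro x ⟨a, b, ha, hb, hab, rfl⟩
  have hwpos : (0:ℝ) < ‖w‖ := norm_pos_iff.2 hw
  have hupos : (0:ℝ) < ‖u‖ := norm_pos_iff.2 hu
  have hx0 : a • u + b • w ≠ 0 := by
    rcases eq_or_lt_of_le ha with ha0 | hapos
    · have hb1 : b = 1 := by linarith
      rw [← ha0, hb1]; simpa using hw
    · intro h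
      have hu_eq : u = (-(b/a)) • w := by
        have h2 : a • u = -(b • w) := eq_neg_of_add_eq_zero_left h
        have h3 := congrArg (a⁻¹ • ·) h2
        simp only [inv_smul_smul₀ hapos.ne', smul_neg, smul_smul] at h3
        rw [h3, div_eq_inv_mul, neg_smul]
      rcases eq_or_lt_of_le hb with hb0 | hbpos
      · apply hu; rw [hu_eq, ← hb0]; simp
      · have hneg : (-(b/a)) < 0 := by
          have : 0 < b / a := div_pos hbpos hapos
          linarith
        have : angle u w = π := by
          rw [hu_eq, angle_smul_left_of_neg _ _ hneg, angle_neg_self_of_nonzero hw]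
        linarith
  refine ⟨hx0, ?_⟩
  set c : ℝ := ⟪u, w⟫ with hc
  have hinner : ⟪a • u + b • w, w⟫ = a * c + b * (‖w‖ * ‖w‖) := by
    rw [inner_add_left, real_inner_smul_left, real_inner_smul_left,
      real_inner_self_eq_norm_mul_norm]
  have hCS : c ≤ ‖u‖ * ‖w‖ := real_inner_le_norm u w
  have hCS' : -(‖u‖ * ‖w‖) ≤ c := neg_le_of_abs_le (abs_real_inner_le_norm u w)
  have hkey : c * ‖a • u + b • w‖ ≤ (a * c + b * (‖w‖ * ‖w‖)) * ‖u‖ := by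
    rcases le_or_gt 0 c with hc0 | hc0
    · have h1 : ‖a • u + b • w‖ ≤ a * ‖u‖ + b * ‖w‖ := by
        calc ‖a • u + b • w‖ ≤ ‖a • u‖ + ‖b • w‖ := norm_add_le _ _
        _ = a * ‖u‖ + b * ‖w‖ := by
            rw [norm_smul, norm_smul, Real.norm_of_nonneg ha, Real.norm_of_nonneg hb]
      nlinarith [mul_le_mul_of_nonneg_left h1 hc0,
        mul_le_mul_of_nonneg_left hCS (mul_nonneg hb hwpos.le)]
    · have h2 : ‖a • u‖ ≤ ‖a • u + b • w‖ + ‖b • w‖ := by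
        simpa using norm_sub_le (a • u + b • w) (b • w)
      have h1 : a * ‖u‖ ≤ ‖a • u + b • w‖ + b * ‖w‖ := by
        rwa [norm_smul, norm_smul, Real.norm_of_nonneg ha, Real.norm_of_nonneg hb] at h2
      nlinarith [mul_le_mul_of_nonpos_left
          (show a * ‖u‖ - b * ‖w‖ ≤ ‖a • u + b • w‖ by linarith) hc0.le,
        mul_le_mul_of_nonneg_left hCS' (mul_nonneg hb hwpos.le)]
  by_contra hlt
  push_neg at hlt
  have hcoslt : Real.cos (angle (a • u + b • w) w) < Real.cos (angle u w) :=
    Real.cos_lt_cos_of_nonneg_of_le_pi (angle_nonneg _ _) (angle_le_pi _ _) hlt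
  rw [cos_angle, cos_angle, hinner] at hcoslt
  have hxpos : (0:ℝ) < ‖a • u + b • w‖ := norm_pos_iff.2 hx0
  rw [div_lt_div_iff₀ (by positivity) (by positivity)] at hcoslt
  nlinarith [mul_le_mul_of_nonneg_right hkey hwpos.le]

/-- Far out along a nonzero direction `p`, the point `x + R • p` is nonzero and makes
a small angle with `p`. -/
lemma far_in_cone (x : V) {p : V} (hp : p ≠ 0) {θ : ℝ} (h0 : 0 < θ) (hθ : θ ≤ π / 2) :
    ∃ R₀ : ℝ, ∀ R : ℝ, R₀ ≤ R → x + R • p ≠ 0 ∧ angle (x + R • p) p < θ := by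
  have hppos : (0:ℝ) < ‖p‖ := norm_pos_iff.2 hp
  set c : ℝ := Real.cos θ with hcdef
  have hc0 : 0 ≤ c := Real.cos_nonneg_of_mem_Icc ⟨by linarith, hθ⟩
  have hc1 : c < 1 := by
    have := Real.cos_lt_cos_of_nonneg_of_le_pi (le_refl 0)
      (hθ.trans (by linarith [Real.pi_pos])) h0
    simpa using this
  refine ⟨2 * ‖x‖ / ((1 - c) * ‖p‖) + 1, fun R hR => ?_⟩
  have hc1p : (0:ℝ) < (1 - c) * ‖p‖ := mul_pos (by linarith) hppos
  have hkey : 2 * ‖x‖ < R * ((1 - c) * ‖p‖) := by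
    have h1 : (2 * ‖x‖ / ((1 - c) * ‖p‖) + 1) * ((1 - c) * ‖p‖)
        = 2 * ‖x‖ + (1 - c) * ‖p‖ := by
      rw [div_add_one hc1p.ne', div_mul_cancel₀ _ hc1p.ne']
    nlinarith [mul_le_mul_of_nonneg_right hR hc1p.le, norm_nonneg x]
  have hRpos : (0:ℝ) < R := by
    have : (0:ℝ) ≤ 2 * ‖x‖ / ((1 - c) * ‖p‖) := by positivity
    linarith
  have hCS' : -(‖x‖ * ‖p‖) ≤ ⟪x, p⟫ := neg_le_of_abs_le (abs_real_inner_le_norm x p)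
  have hinner : ⟪x + R • p, p⟫ = ⟪x, p⟫ + R * (‖p‖ * ‖p‖) := by
    rw [inner_add_left, real_inner_smul_left, real_inner_self_eq_norm_mul_norm]
  have hnle : ‖x + R • p‖ ≤ ‖x‖ + R * ‖p‖ := by
    calc ‖x + R • p‖ ≤ ‖x‖ + ‖R • p‖ := norm_add_le _ _
    _ = ‖x‖ + R * ‖p‖ := by rw [norm_smul, Real.norm_of_nonneg hRpos.le]
  have hgt : c * (‖x + R • p‖ * ‖p‖) < ⟪x + R • p, p⟫ := by
    rw [hinner]
    nlinarith [mul_le_mul_of_nonneg_left (mul_le_mul_of_nonneg_right hnle hppos.le) hc0,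
      mul_lt_mul_of_pos_right hkey hppos,
      mul_nonneg (mul_nonneg (by linarith : (0:ℝ) ≤ 1 - c) (norm_nonneg x)) hppos.le]
  have hxne : x + R • p ≠ 0 := by
    intro h
    rw [h] at hgt
    simp only [inner_zero_left, norm_zero, zero_mul, mul_zero] at hgt
    exact lt_irrefl 0 hgt
  refine ⟨hxne, ?_⟩
  by_contra hle
  push_neg at hle
  have hcosle : Real.cos (angle (x + R • p) p) ≤ Real.cos θ := by
    rcases eq_or_lt_of_le hle with h | h
    · rw [h]
    · exact (Real.cos_lt_cos_of_nonneg_of_le_pi h0.le (angle_le_pi _ _) h).le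
  rw [cos_angle] at hcosle
  have hxpos : (0:ℝ) < ‖x + R • p‖ := norm_pos_iff.2 hxne
  rw [div_le_iff₀ (by positivity)] at hcosle
  rw [← hcdef] at hcosle
  nlinarith [hgt, hcosle]

end Aux

/-- If `Ω ⊆ V` contains a solid `ε`-cone around a 2-dimensional subspace `P` (all
nonzero `v` making angle `< ε` with some nonzero vector of `P`), then for every point
`v` of the cone, the convex hull of the path-component of `Ω` containing `v` is all of
`V`.  In particular a solid cone about a rank-2 subspace is an ample subset. -/
theorem solid_cone_ample
    (V : Type*) [NormedAddCommGroup V] [InnerProductSpace ℝ V] [FiniteDimensional ℝ V]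
    (P : Submodule ℝ V) (hP : finrank ℝ P = 2)
    (ε : ℝ) (hε : 0 < ε) (Ω : Set V)
    (hcone :
      {v : V | v ≠ 0 ∧ ∃ w ∈ P, w ≠ 0 ∧ InnerProductGeometry.angle v w < ε} ⊆ Ω) :
    ∀ v ∈ {v : V | v ≠ 0 ∧ ∃ w ∈ P, w ≠ 0 ∧ InnerProductGeometry.angle v w < ε},
      convexHull ℝ {y | JoinedIn Ω v y} = Set.univ := by
  set C : Set V :=
    {v : V | v ≠ 0 ∧ ∃ w ∈ P, w ≠ 0 ∧ InnerProductGeometry.angle v w < ε} with hC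
  -- every nonzero element of `P` lies in `C`
  have hPC : ∀ y : V, y ∈ P → y ≠ 0 → y ∈ C := fun y hyP hy0 =>
    ⟨hy0, y, hyP, hy0, by rw [InnerProductGeometry.angle_self hy0]; exact hε⟩
  -- improved witnesses: angle can be taken `< π` as well
  have hwit : ∀ u ∈ C, ∃ w ∈ P, w ≠ 0 ∧
      InnerProductGeometry.angle u w < ε ∧ InnerProductGeometry.angle u w < π := by
    rintro u ⟨hu0, w, hwP, hw0, hw⟩
    rcases lt_or_ge (InnerProductGeometry.angle u w) π with h | h
    · exact ⟨w, hwP, hw0, hw, h⟩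
    · have hpi : InnerProductGeometry.angle u w = π :=
        le_antisymm (InnerProductGeometry.angle_le_pi _ _) h
      obtain ⟨-, r, hr, hwu⟩ := InnerProductGeometry.angle_eq_pi_iff.1 hpi
      have huP : u ∈ P := by
        have : u = r⁻¹ • w := by rw [hwu, inv_smul_smul₀ hr.ne]
        rw [this]; exact P.smul_mem _ hwP
      refine ⟨u, huP, hu0, ?_, ?_⟩ <;>
        rw [InnerProductGeometry.angle_self hu0] <;> [exact hε; exact Real.pi_pos]
  -- nonzero elements of `P` are all joined within `C`
  have hrank : (1 : Cardinal) < Module.rank ℝ P := by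
    rw [← finrank_eq_rank ℝ (↥P), hP]
    exact_mod_cast one_lt_two
  have hpc : IsPathConnected ({(0 : P)}ᶜ : Set P) :=
    isPathConnected_compl_singleton_of_one_lt_rank hrank 0
  have hjoinP : ∀ a b : V, a ∈ P → a ≠ 0 → b ∈ P → b ≠ 0 → JoinedIn C a b := by
    intro a b haP ha0 hbP hb0
    have h1 : (⟨a, haP⟩ : P) ∈ ({(0 : P)}ᶜ : Set P) :=
      fun h => ha0 (congrArg Subtype.val h)
    have h2 : (⟨b, hbP⟩ : P) ∈ ({(0 : P)}ᶜ : Set P) :=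
      fun h => hb0 (congrArg Subtype.val h)
    have := (hpc.joinedIn _ h1 _ h2).map (f := (Subtype.val : P → V))
      continuous_subtype_val
    refine this.mono ?_
    rintro y ⟨q, hq, rfl⟩
    exact hPC _ q.2 (fun h => hq (Subtype.ext h))
  -- every point of `C` is joined within `C` (hence within `Ω`) to a nonzero point of `P`
  have hjoinwit : ∀ u ∈ C, ∃ w ∈ P, w ≠ 0 ∧ JoinedIn C u w := by
    intro u hu
    obtain ⟨w, hwP, hw0, hwε, hwπ⟩ := hwit u hu
    refine ⟨w, hwP, hw0, JoinedIn.of_segment_subset ?_⟩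
    intro x hx
    obtain ⟨hx0, hxa⟩ := seg_in_cone hu.1 hw0 hwπ x hx
    exact ⟨hx0, w, hwP, hw0, lt_of_le_of_lt hxa hwε⟩
  intro v hv
  -- `C` is contained in the path component of `v` in `Ω`
  have hCsub : C ⊆ {y | JoinedIn Ω v y} := by
    intro y hy
    obtain ⟨wv, hwvP, hwv0, hjv⟩ := hjoinwit v hv
    obtain ⟨wy, hwyP, hwy0, hjy⟩ := hjoinwit y hy
    have h12 : JoinedIn C wv wy := hjoinP _ _ hwvP hwv0 hwyP hwy0
    exact ((hjv.trans h12).trans hjy.symm).mono hcone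
  -- the convex hull of `C` is everything
  apply Set.eq_univ_of_univ_subset
  intro x _
  obtain ⟨-, p, hpP, hp0, -⟩ := hv
  have hθ0 : 0 < min ε (π / 2) := lt_min hε (by positivity)
  have hθπ : min ε (π / 2) ≤ π / 2 := min_le_right _ _
  obtain ⟨R₀, hR₀⟩ := far_in_cone x hp0 hθ0 hθπ
  obtain ⟨R₁, hR₁⟩ := far_in_cone x (neg_ne_zero.2 hp0) hθ0 hθπ
  set R : ℝ := max R₀ R₁ with hRdef
  obtain ⟨hne1, hang1⟩ := hR₀ R (le_max_left _ _)
  obtain ⟨hne2, hang2⟩ := hR₁ R (le_max_right _ _)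
  have hx1 : x + R • p ∈ C :=
    ⟨hne1, p, hpP, hp0, lt_of_lt_of_le hang1 (min_le_left _ _)⟩
  have hx2 : x + R • (-p) ∈ C :=
    ⟨hne2, -p, P.neg_mem hpP, neg_ne_zero.2 hp0,
      lt_of_lt_of_le hang2 (min_le_left _ _)⟩
  have hxseg : x ∈ segment ℝ (x + R • p) (x + R • (-p)) :=
    ⟨1/2, 1/2, by norm_num, by norm_num, by norm_num, by module⟩
  exact segment_subset_convexHull (hCsub hx1) (hCsub hx2) hxseg
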